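/- Let H be a real Hilbert space, V a closed subspace with orthogonal projection P : H → V, a, v ∈ H, and φ ∈ [0, π]. Define φ₁ = arccos √((cos²φ − cos²∠(v,V⊥))/(1 − cos²∠(v,V⊥))) when ∠(v,V⊥) ∈ (0, π/2] and φ ≤ ∠(v,V⊥) with (φ,∠(v,V⊥)) ≠ (0,0); φ₁ = 0 when φ = ∠(v,V⊥) = 0; and φ₁ = φ otherwise. Then for the cone with apex included but the rest of the boundary excluded: P[C°_H(a, v, φ)] = C°_V(Pa, Pv, φ₁) if φ ≤ ∠(v,V⊥), and P[C°_H(a, v, φ)] = V if φ > ∠(v,V⊥). -/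

import Mathlib

/-!
Put `p = P v`, `w = v - P v ∈ V⊥` and `κ = cos φ ‖v‖`. For `x ∈ H` one has
`⟪x, v⟫ = ⟪P x, p⟫ + ⟪x - P x, w⟫` and `‖x‖² = ‖P x‖² + ‖x - P x‖²`, and for a fixed length
`t = ‖x - P x‖` the term `⟪x - P x, w⟫ ≤ t ‖w‖` is maximal along a unit vector of `V⊥`
aligned with `w`. Hence `z ∈ V` is `P x - P a` for a point `x` of the open cone iff
`κ √(‖z‖² + t²) < ⟪z, p⟫ + t ‖w‖` for some `t ≥ 0`. When `κ < ‖w‖` (that is, `φ > ∠(v,V⊥)`)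
this holds for every `z`; otherwise, by a planar Cauchy–Schwarz inequality and its equality
case, it says `‖z‖ √(κ² - ‖w‖²) < ⟪z, p⟫`, a cone in `V` around `p` whose half-angle `φ₁`
satisfies `cos φ₁ ‖p‖ = √(κ² - ‖w‖²)`.
-/

open scoped RealInnerProductSpace Classical

/-- The angle between a vector `v` and the orthogonal complement of `V`:
`∠(v,V⊥) = arccos (‖v - P v‖ / ‖v‖)` for `v ≠ 0` and `V ≠ H`, with the conventions
`∠(v,V⊥) = π` when `v = 0` or `V = H` (and it gives `0` when `V = {0}`, `v ≠ 0`). -/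
noncomputable def angleToPerp {H : Type*} [NormedAddCommGroup H] [InnerProductSpace ℝ H]
    [CompleteSpace H] (V : Submodule ℝ H) [CompleteSpace V] (v : H) : ℝ :=
  if v = 0 ∨ V = ⊤ then Real.pi
  else Real.arccos (‖v - (Submodule.orthogonalProjectionOnto V v : H)‖ / ‖v‖)

open Real

lemma mul_sqrt_sub_sq_add_mul_le_mul_sqrt {A t W c : ℝ} (hW : 0 ≤ W) (hWc : W ≤ c) :
    A * √(c ^ 2 - W ^ 2) + t * W ≤ c * √(A ^ 2 + t ^ 2) := by
  set D := √(c ^ 2 - W ^ 2)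
  have hD : D ^ 2 = c ^ 2 - W ^ 2 := sq_sqrt (by nlinarith)
  have hS : √(A ^ 2 + t ^ 2) ^ 2 = A ^ 2 + t ^ 2 := sq_sqrt (by positivity)
  refine abs_le_of_sq_le_sq' ?_ (mul_nonneg (hW.trans hWc) (sqrt_nonneg _)) |>.2
  nlinarith [sq_nonneg (A * W - t * D)]

lemma exists_mul_sqrt_lt_add_mul_of_lt {A W c I : ℝ} (hA : 0 ≤ A) (hcW : c < W) :
    ∃ t ≥ 0, c * √(A ^ 2 + t ^ 2) < I + t * W := by
  set t := (|c| * A + |I| + 1) / (W - c)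
  have ht : t * (W - c) = |c| * A + |I| + 1 := div_mul_cancel₀ _ (sub_pos.2 hcW).ne'
  have ht0 : 0 ≤ t := by positivity
  refine ⟨t, ht0, ?_⟩
  -- `t ≤ √(A² + t²) ≤ A + t` bounds the left side by `c t + |c| A`
  have hlow : t ≤ √(A ^ 2 + t ^ 2) := le_sqrt_of_sq_le (by nlinarith)
  have hup : √(A ^ 2 + t ^ 2) ≤ A + t := (sqrt_le_left (by positivity)).2 (by nlinarith)
  nlinarith [le_abs_self c, abs_nonneg c, neg_abs_le I,
    mul_nonneg (sub_nonneg.2 (le_abs_self c)) (sub_nonneg.2 hlow),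
    mul_nonneg (abs_nonneg c) (sub_nonneg.2 hup)]

lemma exists_mul_sqrt_lt_add_mul_self {A W I : ℝ} (hW : 0 ≤ W) (hI : 0 < I) :
    ∃ t ≥ 0, W * √(A ^ 2 + t ^ 2) < I + t * W := by
  set t := (W * A ^ 2 + 1) / I
  have ht : t * I = W * A ^ 2 + 1 := div_mul_cancel₀ _ hI.ne'
  have ht0 : 0 < t := by positivity
  refine ⟨t, ht0.le, ?_⟩
  have hS : √(A ^ 2 + t ^ 2) ^ 2 = A ^ 2 + t ^ 2 := sq_sqrt (by positivity)
  have hlow : t ≤ √(A ^ 2 + t ^ 2) := le_sqrt_of_sq_le (by nlinarith)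
  have hgap : t * (√(A ^ 2 + t ^ 2) - t) ≤ A ^ 2 := by nlinarith
  have hgapW : W * (√(A ^ 2 + t ^ 2) - t) * t < I * t := by
    nlinarith [mul_le_mul_of_nonneg_left hgap hW]
  nlinarith [lt_of_mul_lt_mul_right hgapW ht0.le]

lemma exists_mul_sqrt_lt_add_mul_of_gt {A W c I : ℝ} (hA : 0 ≤ A) (hW : 0 ≤ W)
    (hWc : W < c) (h : A * √(c ^ 2 - W ^ 2) < I) :
    ∃ t ≥ 0, c * √(A ^ 2 + t ^ 2) < I + t * W := by
  set D := √(c ^ 2 - W ^ 2)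
  have hD : D ^ 2 = c ^ 2 - W ^ 2 := sq_sqrt (by nlinarith)
  have hD0 : 0 < D := sqrt_pos.2 (by nlinarith)
  have hc : 0 ≤ c := hW.trans hWc.le
  -- equality case of `mul_sqrt_sub_sq_add_mul_le_mul_sqrt`
  refine ⟨A * W / D, div_nonneg (mul_nonneg hA hW) hD0.le, ?_⟩
  have hS : √(A ^ 2 + (A * W / D) ^ 2) = A * c / D := by
    rw [sqrt_eq_iff_eq_sq (by positivity) (div_nonneg (mul_nonneg hA hc) hD0.le)]
    field_simp
    nlinarith
  have hmin : c * (A * c / D) = A * D + A * W / D * W := by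
    field_simp
    nlinarith
  rw [hS, hmin]
  linarith

theorem exists_mul_sqrt_lt_add_mul_iff {A W c I : ℝ} (hA : 0 ≤ A) (hW : 0 ≤ W) :
    (∃ t ≥ 0, c * √(A ^ 2 + t ^ 2) < I + t * W) ↔ (W ≤ c → A * √(c ^ 2 - W ^ 2) < I) := by
  constructor
  · rintro ⟨t, -, ht⟩ hWc
    linarith [mul_sqrt_sub_sq_add_mul_le_mul_sqrt (A := A) (t := t) hW hWc]
  · intro h
    rcases lt_trichotomy c W with hcW | rfl | hWc
    · exact exists_mul_sqrt_lt_add_mul_of_lt hA hcW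
    · exact exists_mul_sqrt_lt_add_mul_self hW (by simpa using h le_rfl)
    · exact exists_mul_sqrt_lt_add_mul_of_gt hA hW hWc (h hWc.le)

namespace Submodule

variable {H : Type*} [NormedAddCommGroup H] [InnerProductSpace ℝ H]

theorem exists_norm_eq_one_inner_eq_norm {K : Submodule ℝ H} (hK : K ≠ ⊥) {w : H}
    (hw : w ∈ K) : ∃ e ∈ K, ‖e‖ = 1 ∧ ⟪e, w⟫ = ‖w‖ := by
  by_cases hw0 : w = 0
  · obtain ⟨e, heK, he⟩ := exists_mem_ne_zero_of_ne_bot hK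
    exact ⟨‖e‖⁻¹ • e, K.smul_mem _ heK, norm_smul_inv_norm he, by simp [hw0]⟩
  · refine ⟨‖w‖⁻¹ • w, K.smul_mem _ hw, norm_smul_inv_norm hw0, ?_⟩
    rw [real_inner_smul_left, real_inner_self_eq_norm_sq]
    field_simp

variable (V : Submodule ℝ H) [V.HasOrthogonalProjection]

theorem inner_eq_inner_starProjection_add_inner_sub (x v : H) :
    ⟪x, v⟫ = ⟪V.starProjection x, V.starProjection v⟫ +
      ⟪x - V.starProjection x, v - V.starProjection v⟫ := by
  have h₁ : ⟪x - V.starProjection x, V.starProjection v⟫ = 0 :=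
    V.starProjection_inner_eq_zero x _ (V.starProjection_apply_mem v)
  have h₂ : ⟪V.starProjection x, v - V.starProjection v⟫ = 0 := by
    rw [real_inner_comm]; exact V.starProjection_inner_eq_zero v _ (V.starProjection_apply_mem x)
  conv_lhs => rw [← add_sub_cancel (V.starProjection x) x, ← add_sub_cancel (V.starProjection v) v]
  simp only [inner_add_left, inner_add_right, h₁, h₂]
  ring

theorem norm_sq_eq_norm_sq_starProjection_add (x : H) :
    ‖x‖ ^ 2 = ‖V.starProjection x‖ ^ 2 + ‖x - V.starProjection x‖ ^ 2 := by
  simpa using V.norm_sq_eq_add_norm_sq_starProjection x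

theorem exists_starProjection_eq_and_mul_norm_lt_inner_iff (hV : V ≠ ⊤) {z : H} (hz : z ∈ V)
    (v : H) (κ : ℝ) :
    (∃ x, V.starProjection x = z ∧ κ * ‖x‖ < ⟪x, v⟫) ↔
      ∃ t ≥ 0, κ * √(‖z‖ ^ 2 + t ^ 2) <
        ⟪z, V.starProjection v⟫ + t * ‖v - V.starProjection v‖ := by
  constructor
  · rintro ⟨x, rfl, hx⟩
    refine ⟨‖x - V.starProjection x‖, norm_nonneg _, ?_⟩
    rw [← V.norm_sq_eq_norm_sq_starProjection_add, sqrt_sq (norm_nonneg _)]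
    rw [V.inner_eq_inner_starProjection_add_inner_sub] at hx
    linarith [real_inner_le_norm (x - V.starProjection x) (v - V.starProjection v)]
  · rintro ⟨t, ht, hlt⟩
    obtain ⟨e, he, he1, hev⟩ := exists_norm_eq_one_inner_eq_norm
      (mt V.orthogonal_eq_bot_iff.1 hV) (V.sub_starProjection_mem_orthogonal v)
    have hP : V.starProjection (z + t • e) = z :=
      V.eq_starProjection_of_mem_orthogonal' hz (Vᗮ.smul_mem t he) rfl
    refine ⟨z + t • e, hP, ?_⟩
    rw [V.inner_eq_inner_starProjection_add_inner_sub, ← sqrt_sq (norm_nonneg (z + t • e)),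
      V.norm_sq_eq_norm_sq_starProjection_add, hP, add_sub_cancel_left, real_inner_smul_left,
      hev, norm_smul, he1, Real.norm_of_nonneg ht, mul_one]
    exact hlt

theorem image_starProjection_setOf_mul_norm_lt_inner (hV : V ≠ ⊤) (a v : H) (κ : ℝ) :
    V.starProjection '' {u | κ * ‖u - a‖ < ⟪u - a, v⟫} =
      {y | y ∈ V ∧ (‖v - V.starProjection v‖ ≤ κ →
        ‖y - V.starProjection a‖ * √(κ ^ 2 - ‖v - V.starProjection v‖ ^ 2) <
          ⟪y - V.starProjection a, V.starProjection v⟫)} := by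
  ext y
  have hcrit {z : H} (hz : z ∈ V) := (V.exists_starProjection_eq_and_mul_norm_lt_inner_iff hV hz
    v κ).trans (exists_mul_sqrt_lt_add_mul_iff (norm_nonneg z) (norm_nonneg _))
  constructor
  · rintro ⟨u, hu, rfl⟩
    have hz := V.sub_mem (V.starProjection_apply_mem u) (V.starProjection_apply_mem a)
    exact ⟨V.starProjection_apply_mem u, (hcrit hz).1 ⟨u - a, map_sub _ _ _, hu⟩⟩
  · rintro ⟨hy, h⟩
    obtain ⟨x, hx, hlt⟩ := (hcrit (V.sub_mem hy (V.starProjection_apply_mem a))).2 h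
    refine ⟨a + x, by simpa using hlt, ?_⟩
    rw [map_add, hx, add_sub_cancel]

end Submodule

section angleToPerp

variable {H : Type*} [NormedAddCommGroup H] [InnerProductSpace ℝ H] [CompleteSpace H]
  (V : Submodule ℝ H) [CompleteSpace V] {v : H} {φ : ℝ}

theorem angleToPerp_of_eq_zero_or_eq_top (h : v = 0 ∨ V = ⊤) : angleToPerp V v = π :=
  if_pos h

theorem ne_zero_and_ne_top_of_angleToPerp_lt_pi (h : angleToPerp V v < π) : v ≠ 0 ∧ V ≠ ⊤ :=
  not_or.1 fun h' => h.ne (angleToPerp_of_eq_zero_or_eq_top V h')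

theorem angleToPerp_of_ne (hv : v ≠ 0) (hV : V ≠ ⊤) :
    angleToPerp V v = arccos (‖v - V.starProjection v‖ / ‖v‖) := by
  simp [angleToPerp, hv, hV]

theorem cos_angleToPerp (hv : v ≠ 0) (hV : V ≠ ⊤) :
    cos (angleToPerp V v) = ‖v - V.starProjection v‖ / ‖v‖ := by
  rw [angleToPerp_of_ne V hv hV]
  exact cos_arccos (by linarith [div_nonneg (norm_nonneg (v - V.starProjection v)) (norm_nonneg v)])
    ((div_le_one (norm_pos_iff.2 hv)).2 (by simpa using Vᗮ.norm_starProjection_apply_le v))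

theorem norm_sub_starProjection_le_cos_mul_norm (hV : V ≠ ⊤) (hφ0 : 0 ≤ φ)
    (hle : φ ≤ angleToPerp V v) : ‖v - V.starProjection v‖ ≤ cos φ * ‖v‖ := by
  by_cases hv : v = 0
  · simp [hv]
  have hθπ : angleToPerp V v ≤ π := by rw [angleToPerp_of_ne V hv hV]; exact arccos_le_pi _
  have := cos_le_cos_of_nonneg_of_le_pi hφ0 hθπ hle
  rwa [cos_angleToPerp V hv hV, div_le_iff₀ (norm_pos_iff.2 hv)] at this

theorem cos_mul_norm_lt_norm_sub_starProjection (hφπ : φ ≤ π) (hlt : angleToPerp V v < φ) :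
    cos φ * ‖v‖ < ‖v - V.starProjection v‖ := by
  obtain ⟨hv, hV⟩ := ne_zero_and_ne_top_of_angleToPerp_lt_pi V (hlt.trans_le hφπ)
  have hθ0 : 0 ≤ angleToPerp V v := by rw [angleToPerp_of_ne V hv hV]; exact arccos_nonneg _
  have := cos_lt_cos_of_nonneg_of_le_pi hθ0 hφπ hlt
  rwa [cos_angleToPerp V hv hV, lt_div_iff₀ (norm_pos_iff.2 hv)] at this

noncomputable def projectedHalfAngle (v : H) (φ : ℝ) : ℝ :=
  if 0 < angleToPerp V v ∧ angleToPerp V v ≤ Real.pi / 2 ∧ φ ≤ angleToPerp V v ∧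
      ¬(φ = 0 ∧ angleToPerp V v = 0) then
    Real.arccos (Real.sqrt ((Real.cos φ ^ 2 - Real.cos (angleToPerp V v) ^ 2) /
      (1 - Real.cos (angleToPerp V v) ^ 2)))
  else if φ = 0 ∧ angleToPerp V v = 0 then 0
  else φ

theorem projectedHalfAngle_of_eq_zero_or_eq_top (h : v = 0 ∨ V = ⊤) :
    projectedHalfAngle V v φ = φ := by
  have hπ : ¬π ≤ π / 2 := by linarith [pi_pos]
  simp [projectedHalfAngle, angleToPerp_of_eq_zero_or_eq_top V h, pi_ne_zero, hπ]

theorem cos_projectedHalfAngle_mul_norm_starProjection (hV : V ≠ ⊤)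
    (hle : φ ≤ angleToPerp V v) :
    cos (projectedHalfAngle V v φ) * ‖V.starProjection v‖ =
      √((cos φ * ‖v‖) ^ 2 - ‖v - V.starProjection v‖ ^ 2) := by
  have hpyth := V.norm_sq_eq_norm_sq_starProjection_add v
  set p := V.starProjection v
  set W := ‖v - p‖
  by_cases hp : p = 0
  · rw [hp, norm_zero, mul_zero, eq_comm, sqrt_eq_zero_of_nonpos]
    rw [hp, norm_zero] at hpyth
    nlinarith [cos_sq_le_one φ, sq_nonneg ‖v‖]
  have hv : v ≠ 0 := by rintro rfl; simp [p] at hp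
  have hp0 : 0 < ‖p‖ := norm_pos_iff.2 hp
  have hv0 : 0 < ‖v‖ := norm_pos_iff.2 hv
  have hWv : W / ‖v‖ < 1 := (div_lt_one hv0).2 (by nlinarith [norm_nonneg W])
  have hθ0 : 0 < angleToPerp V v := by
    rw [angleToPerp_of_ne V hv hV]; exact arccos_pos.2 hWv
  have hθ2 : angleToPerp V v ≤ π / 2 := by
    rw [angleToPerp_of_ne V hv hV]; exact arccos_le_pi_div_two.2 (by positivity)
  rw [projectedHalfAngle, if_pos ⟨hθ0, hθ2, hle, fun h => hθ0.ne' h.2⟩, cos_angleToPerp V hv hV]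
  have harg : (cos φ ^ 2 - (W / ‖v‖) ^ 2) / (1 - (W / ‖v‖) ^ 2) =
      ((cos φ * ‖v‖) ^ 2 - W ^ 2) / ‖p‖ ^ 2 := by
    have hWv2 : (W / ‖v‖) ^ 2 < 1 := pow_lt_one₀ (by positivity) hWv two_ne_zero
    rw [div_eq_div_iff (sub_pos.2 hWv2).ne' (by positivity)]
    field_simp
    rw [hpyth]
    ring
  have hle1 : √((cos φ * ‖v‖) ^ 2 - W ^ 2) ≤ ‖p‖ :=
    (sqrt_le_left hp0.le).2 (by nlinarith [cos_sq_le_one φ, sq_nonneg ‖v‖])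
  rw [harg, sqrt_div' _ (sq_nonneg _), sqrt_sq hp0.le,
    cos_arccos (by linarith [div_nonneg (sqrt_nonneg ((cos φ * ‖v‖) ^ 2 - W ^ 2)) hp0.le])
      ((div_le_one hp0).2 hle1), div_mul_cancel₀ _ hp0.ne']

end angleToPerp

/-- Projection of the cone `C°_H(a,v,φ)` with the apex included but the
rest of the boundary excluded: with `φ₁ = arccos √((cos²φ - cos²∠(v,V⊥))/(1 - cos²∠(v,V⊥)))`
when `∠(v,V⊥) ∈ (0, π/2]` and `φ ≤ ∠(v,V⊥)` (with `(φ, ∠(v,V⊥)) ≠ (0,0)`), `φ₁ = 0` when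
`φ = ∠(v,V⊥) = 0`, and `φ₁ = φ` otherwise, one has
`P[C°_H(a,v,φ)] = C°_V(P a, P v, φ₁)` if `φ ≤ ∠(v,V⊥)`, and `P[C°_H(a,v,φ)] = V` if
`φ > ∠(v,V⊥)`. -/
theorem stmt13 {H : Type*} [NormedAddCommGroup H] [InnerProductSpace ℝ H] [CompleteSpace H]
    (V : Submodule ℝ H) [CompleteSpace V]
    (a v : H) (φ : ℝ) (hφ0 : 0 ≤ φ) (hφπ : φ ≤ Real.pi)
    (φ₁ : ℝ)
    (hφ₁ : φ₁ =
      if 0 < angleToPerp V v ∧ angleToPerp V v ≤ Real.pi / 2 ∧ φ ≤ angleToPerp V v ∧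
          ¬(φ = 0 ∧ angleToPerp V v = 0) then
        Real.arccos (Real.sqrt ((Real.cos φ ^ 2 - Real.cos (angleToPerp V v) ^ 2) /
          (1 - Real.cos (angleToPerp V v) ^ 2)))
      else if φ = 0 ∧ angleToPerp V v = 0 then 0
      else φ) :
    (φ ≤ angleToPerp V v →
      (fun u : H => (Submodule.orthogonalProjectionOnto V u : H)) ''
          ({a} ∪ {u : H | ⟪u - a, v⟫ > Real.cos φ * (‖u - a‖ * ‖v‖)}) =
        {(Submodule.orthogonalProjectionOnto V a : H)} ∪
          {y : H | y ∈ V ∧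
            ⟪y - (Submodule.orthogonalProjectionOnto V a : H), (Submodule.orthogonalProjectionOnto V v : H)⟫ >
              Real.cos φ₁ * (‖y - (Submodule.orthogonalProjectionOnto V a : H)‖ *
                ‖(Submodule.orthogonalProjectionOnto V v : H)‖)}) ∧
    (angleToPerp V v < φ →
      (fun u : H => (Submodule.orthogonalProjectionOnto V u : H)) ''
          ({a} ∪ {u : H | ⟪u - a, v⟫ > Real.cos φ * (‖u - a‖ * ‖v‖)}) = (V : Set H)) := by
  replace hφ₁ : φ₁ = projectedHalfAngle V v φ := hφ₁
  subst hφ₁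
  simp only [Submodule.coe_orthogonalProjectionOnto_apply, gt_iff_lt, Set.image_union,
    Set.image_singleton]
  have hcone : {u | cos φ * (‖u - a‖ * ‖v‖) < ⟪u - a, v⟫} =
      {u | cos φ * ‖v‖ * ‖u - a‖ < ⟪u - a, v⟫} := by
    simp only [mul_assoc, mul_comm ‖v‖]
  constructor
  · intro hle
    by_cases hV : V = ⊤
    · subst hV
      simp [projectedHalfAngle_of_eq_zero_or_eq_top _ (Or.inr rfl), Submodule.starProjection_top]
    have hW := norm_sub_starProjection_le_cos_mul_norm V hV hφ0 hle
    rw [hcone, V.image_starProjection_setOf_mul_norm_lt_inner hV,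
      ← cos_projectedHalfAngle_mul_norm_starProjection V hV hle]
    simp only [hW, forall_const, mul_left_comm]
  · intro hlt
    have hV := (ne_zero_and_ne_top_of_angleToPerp_lt_pi V (hlt.trans_le hφπ)).2
    have hκ := cos_mul_norm_lt_norm_sub_starProjection V hφπ hlt
    rw [hcone, V.image_starProjection_setOf_mul_norm_lt_inner hV]
    simp only [hκ.not_ge, false_imp_iff, and_true]
    exact Set.union_eq_right.2 (Set.singleton_subset_iff.2 (V.starProjection_apply_mem a))
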